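/- For every integer q ≥ 0 and every function a : {0,…,q} → ℤ₂, a(0)·∏_{r=1}^{q} (a(r−1) + a(r)) = ( ∏_{j even, 0 ≤ j ≤ q} a(j) ) · ( ∏_{j odd, 0 ≤ j ≤ q} (1 + a(j)) ) in ℤ₂. -/
import Mathlib

private lemma zmod2_mul_self : ∀ x : ZMod 2, x * x = x := by decide

private lemma zmod2_one_add_mul : ∀ x : ZMod 2, (1 + x) * x = 0 := by decide

private lemma rhs_mul_a (q : ℕ) (a : ℕ → ZMod 2) :
    ((∏ j ∈ (Finset.range (q + 1)).filter (fun j => Even j), a j)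
        * ∏ j ∈ (Finset.range (q + 1)).filter (fun j => Odd j), (1 + a j)) * a q
      = if Even q then
          (∏ j ∈ (Finset.range (q + 1)).filter (fun j => Even j), a j)
            * ∏ j ∈ (Finset.range (q + 1)).filter (fun j => Odd j), (1 + a j)
        else 0 := by
  by_cases hq : Even q
  · simp only [hq, if_true]
    have hmem : q ∈ (Finset.range (q + 1)).filter (fun j => Even j) := by
      simp [hq]
    rw [← Finset.mul_prod_erase _ _ hmem]
    calc _ = (a q * a q) * ((∏ j ∈ ((Finset.range (q + 1)).filter (fun j => Even j)).erase q, a j)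
          * ∏ j ∈ (Finset.range (q + 1)).filter (fun j => Odd j), (1 + a j)) := by ring
      _ = _ := by rw [zmod2_mul_self]; ring
  · simp only [hq, if_false]
    have hmem : q ∈ (Finset.range (q + 1)).filter (fun j => Odd j) := by
      simp [Nat.not_even_iff_odd.mp hq]
    rw [← Finset.mul_prod_erase _ _ hmem]
    have : (1 + a q) * a q = 0 := zmod2_one_add_mul _
    calc _ = ((1 + a q) * a q) * ((∏ j ∈ (Finset.range (q + 1)).filter (fun j => Even j), a j)
          * ∏ j ∈ ((Finset.range (q + 1)).filter (fun j => Odd j)).erase q, (1 + a j)) := by ring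
      _ = 0 := by rw [this, zero_mul]

/-- For every `q ≥ 0` and every function `a : {0,…,q} → ℤ₂`,
`a(0)·∏_{r=1}^{q} (a(r−1) + a(r))
  = (∏_{j even, 0 ≤ j ≤ q} a(j)) · (∏_{j odd, 0 ≤ j ≤ q} (1 + a(j)))` in `ℤ₂`.
(The left-hand side is the value of `a ∪ δa ∪ ⋯ ∪ δa`, with `q` factors of `δa`, on the
ordered simplex `⟨0,…,q⟩`.) -/
theorem a_cup_delta_a_repeat (q : ℕ) (a : ℕ → ZMod 2) :
    a 0 * ∏ r ∈ Finset.Icc 1 q, (a (r - 1) + a r)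
      = (∏ j ∈ (Finset.range (q + 1)).filter (fun j => Even j), a j)
        * ∏ j ∈ (Finset.range (q + 1)).filter (fun j => Odd j), (1 + a j) := by
  induction q with
  | zero => norm_num [Finset.filter_singleton]
  | succ q ih =>
    rw [Finset.prod_Icc_succ_top (by omega : 1 ≤ q + 1), ← mul_assoc, ih]
    have hrange : Finset.range (q + 1 + 1) = insert (q + 1) (Finset.range (q + 1)) :=
      Finset.range_add_one
    rw [hrange, Finset.filter_insert, Finset.filter_insert]
    have hnotmem : (q + 1) ∉ Finset.range (q + 1) := by simp
    have key := rhs_mul_a q a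
    set E := ∏ j ∈ (Finset.range (q + 1)).filter (fun j => Even j), a j with hE
    set O := ∏ j ∈ (Finset.range (q + 1)).filter (fun j => Odd j), (1 + a j) with hO
    by_cases hq : Even q
    · have h1 : ¬ Even (q + 1) := by simp [Nat.even_add_one, hq]
      have h2 : Odd (q + 1) := Nat.not_even_iff_odd.mp h1
      simp only [h1, h2, if_true, if_false,
        Finset.prod_insert (by simp : (q+1) ∉ (Finset.range (q+1)).filter (fun j => Odd j))]
      rw [if_pos hq] at key
      simp only [Nat.add_sub_cancel]
      calc E * O * (a q + a (q + 1)) = E * O * a q + E * O * a (q + 1) := by ring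
        _ = E * O + E * O * a (q + 1) := by rw [key]
        _ = E * ((1 + a (q + 1)) * O) := by ring
    · have h1 : Even (q + 1) := Nat.even_add_one.mpr hq
      have h2 : ¬ Odd (q + 1) := by simp [h1, Nat.not_odd_iff_even.mpr h1]
      simp only [h1, h2, if_true, if_false,
        Finset.prod_insert (by simp : (q+1) ∉ (Finset.range (q+1)).filter (fun j => Even j))]
      rw [if_neg hq] at key
      simp only [Nat.add_sub_cancel]
      calc E * O * (a q + a (q + 1)) = E * O * a q + E * O * a (q + 1) := by ring
        _ = E * O * a (q + 1) := by rw [key]; ring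
        _ = a (q + 1) * E * O := by ring
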